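/- Let N ≥ 2, let c_1,…,c_N be positive real numbers, let ν_1,…,ν_N be positive integers, and set q = 1/(∑_{i=1}^N ν_i^{-1}). Then for every complex s with Re s > 0: ∫_{ℝ^{N−1}} (∑_{i=1}^{N−1} c_i e^{−ν_i y_i} + c_N e^{ν_N (y_1+⋯+y_{N−1})})^{−s} dy = q·(ν_1⋯ν_N)^{−1}·(∏_{i=1}^N c_i^{q/ν_i})^{−s}·Γ(s)^{−1}·∏_{i=1}^N Γ(q s / ν_i), where Γ is the complex Gamma function. -/

import Mathlib

/-!
Since `Γ(s) x^{-s} = ∫ exp(sτ - x e^τ) dτ` for `x > 0`, the integral of `f(y)^{-s}` (`f` the sum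
of exponentials) is `Γ(s)⁻¹` times a double integral over `z = (y, τ) ∈ ℝ^N`. The linear
substitution `w_i = τ - ν_i y_i` (`i < N`), `w_N = τ + ν_N ∑ y_i` turns `f(y) e^τ` into
`∑ c_i e^{w_i}` and, because `∑ w_i / ν_i = τ / q`, turns `sτ` into `∑ a_i w_i` with
`a_i = q s / ν_i`. Its Jacobian is `∏ ν_i / q`, and the new integrand `∏ exp(a_i w_i - c_i e^{w_i})`
factorises into the Gamma integrals `c_i^{-a_i} Γ(a_i)`.
-/

open Finset Real MeasureTheory Complex Matrix

section Substitution

variable {E : Type*} [NormedAddCommGroup E] [NormedSpace ℝ E]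

theorem integral_comp_exp (g : ℝ → E) : ∫ x, rexp x • g (rexp x) = ∫ y in Set.Ioi 0, g y := by
  rw [← Real.range_exp, ← Set.image_univ, integral_image_eq_integral_abs_deriv_smul
    MeasurableSet.univ (fun x _ ↦ (Real.hasDerivAt_exp x).hasDerivWithinAt)
    (fun x _ y _ hxy ↦ exp_injective hxy), setIntegral_univ]
  simp only [abs_of_pos (exp_pos _)]

theorem integrable_comp_exp_iff (g : ℝ → E) :
    Integrable (fun x ↦ rexp x • g (rexp x)) ↔ IntegrableOn g (Set.Ioi 0) := by
  rw [← Real.range_exp, ← Set.image_univ, integrableOn_image_iff_integrableOn_abs_deriv_smul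
    MeasurableSet.univ (fun x _ ↦ (Real.hasDerivAt_exp x).hasDerivWithinAt)
    (fun x _ y _ hxy ↦ exp_injective hxy), integrableOn_univ]
  simp only [abs_of_pos (exp_pos _)]

end Substitution

theorem exp_mul_sub_exp_eq_smul (a : ℂ) (w : ℝ) :
    cexp (a * w - rexp w) = rexp w • (rexp (-rexp w) * ((rexp w : ℂ) ^ (a - 1))) := by
  rw [Complex.cpow_def_of_ne_zero (by exact_mod_cast (exp_pos w).ne'), ← ofReal_log (exp_pos w).le,
    Real.log_exp, real_smul]
  push_cast
  rw [← Complex.exp_add, ← Complex.exp_add]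
  congr 1
  ring

theorem integrable_exp_mul_sub_exp {a : ℂ} (ha : 0 < a.re) :
    Integrable (fun w : ℝ ↦ cexp (a * w - rexp w)) := by
  simpa only [exp_mul_sub_exp_eq_smul] using
    (integrable_comp_exp_iff _).2 (Complex.GammaIntegral_convergent ha)

theorem integral_exp_mul_sub_exp {a : ℂ} (ha : 0 < a.re) :
    ∫ w : ℝ, cexp (a * w - rexp w) = Complex.Gamma a := by
  simp only [exp_mul_sub_exp_eq_smul]
  rw [Complex.Gamma_eq_integral ha]
  exact integral_comp_exp (fun x : ℝ ↦ (rexp (-x) : ℂ) * (x : ℂ) ^ (a - 1))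

theorem exp_mul_add_log_sub_exp {a : ℂ} {c : ℝ} (hc : 0 < c) (w : ℝ) :
    cexp (a * ↑(w + Real.log c) - rexp (w + Real.log c)) =
      (c : ℂ) ^ a * cexp (a * w - c * rexp w) := by
  rw [Complex.cpow_def_of_ne_zero (by exact_mod_cast hc.ne'), ← ofReal_log hc.le, ← Complex.exp_add,
    Real.exp_add, Real.exp_log hc]
  congr 1
  push_cast
  ring

theorem integrable_exp_mul_sub_mul_exp {a : ℂ} (ha : 0 < a.re) {c : ℝ} (hc : 0 < c) :
    Integrable (fun w : ℝ ↦ cexp (a * w - c * rexp w)) := by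
  have := ((integrable_exp_mul_sub_exp ha).comp_add_right (Real.log c)).const_mul ((c : ℂ) ^ a)⁻¹
  refine this.congr (Filter.Eventually.of_forall fun w ↦ ?_)
  simp only [exp_mul_add_log_sub_exp hc]
  exact inv_mul_cancel_left₀ (by simp [hc.ne']) _

theorem integral_exp_mul_sub_mul_exp {a : ℂ} (ha : 0 < a.re) {c : ℝ} (hc : 0 < c) :
    ∫ w : ℝ, cexp (a * w - c * rexp w) = (c : ℂ) ^ (-a) * Complex.Gamma a := by
  rw [← integral_exp_mul_sub_exp ha,
    ← integral_add_right_eq_self (fun w : ℝ ↦ cexp (a * w - rexp w)) (Real.log c)]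
  simp only [exp_mul_add_log_sub_exp hc]
  rw [integral_const_mul, cpow_neg, inv_mul_cancel_left₀]
  simp [hc.ne']

theorem integrable_prod_exp_mul_sub_mul_exp {ι : Type*} [Fintype ι] {a : ι → ℂ}
    (ha : ∀ i, 0 < (a i).re) {c : ι → ℝ} (hc : ∀ i, 0 < c i) :
    Integrable (fun w : ι → ℝ ↦ ∏ i, cexp (a i * w i - c i * rexp (w i))) :=
  Integrable.fintype_prod fun i ↦ integrable_exp_mul_sub_mul_exp (ha i) (hc i)

theorem integral_prod_exp_mul_sub_mul_exp {ι : Type*} [Fintype ι] {a : ι → ℂ}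
    (ha : ∀ i, 0 < (a i).re) {c : ι → ℝ} (hc : ∀ i, 0 < c i) :
    ∫ w : ι → ℝ, ∏ i, cexp (a i * w i - c i * rexp (w i)) =
      ∏ i, (c i : ℂ) ^ (-a i) * Complex.Gamma (a i) := by
  rw [volume_pi, integral_fintype_prod_eq_prod (fun i (w : ℝ) ↦ cexp (a i * w - c i * rexp w))]
  exact prod_congr rfl fun i _ ↦ integral_exp_mul_sub_mul_exp (ha i) (hc i)

theorem ofReal_cpow_neg_eq_integral {x : ℝ} (hx : 0 < x) {s : ℂ} (hs : 0 < s.re) :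
    (x : ℂ) ^ (-s) = (Complex.Gamma s)⁻¹ * ∫ τ : ℝ, cexp (s * τ - x * rexp τ) := by
  rw [integral_exp_mul_sub_mul_exp hs hx, mul_comm,
    mul_inv_cancel_right₀ (Gamma_ne_zero_of_re_pos hs)]

theorem ofReal_prod_cpow {ι : Type*} (t : Finset ι) {x : ι → ℝ} (hx : ∀ i, 0 ≤ x i) (z : ℂ) :
    ((∏ i ∈ t, x i : ℝ) : ℂ) ^ z = ∏ i ∈ t, (x i : ℂ) ^ z := by
  classical
  induction t using Finset.induction_on with
  | empty => simp
  | insert i t hi ih =>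
    rw [prod_insert hi, prod_insert hi, ofReal_mul,
      mul_cpow_ofReal_nonneg (hx i) (prod_nonneg fun j _ ↦ hx j), ih]

theorem prod_ofReal_cpow_mul {ι : Type*} (t : Finset ι) {x : ι → ℝ} (hx : ∀ i, 0 ≤ x i)
    (r : ι → ℝ) (z : ℂ) :
    ∏ i ∈ t, (x i : ℂ) ^ ((r i : ℂ) * z) = ((∏ i ∈ t, x i ^ r i : ℝ) : ℂ) ^ z := by
  rw [ofReal_prod_cpow t (fun i ↦ rpow_nonneg (hx i) _)]
  exact prod_congr rfl fun i _ ↦ cpow_mul_ofReal_nonneg (hx i) _ _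

section LinearChangeOfVariables

variable {ι : Type*} [Fintype ι] [DecidableEq ι] {M : Matrix ι ι ℝ}
  {E : Type*} [NormedAddCommGroup E]

theorem measurableEmbedding_mulVec (hM : M.det ≠ 0) : MeasurableEmbedding (M *ᵥ ·) :=
  (toLin' M).continuous_of_finiteDimensional.measurableEmbedding
    (mulVec_injective_of_det_ne_zero hM)

theorem integral_comp_mulVec [NormedSpace ℝ E] (hM : M.det ≠ 0) (G : (ι → ℝ) → E) :
    ∫ z, G (M *ᵥ z) = |M.det|⁻¹ • ∫ w, G w := by
  rw [← (measurableEmbedding_mulVec hM).integral_map]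
  erw [Real.map_matrix_volume_pi_eq_smul_volume_pi hM]
  rw [integral_smul_measure, ENNReal.toReal_ofReal (abs_nonneg _), abs_inv]

theorem integrable_comp_mulVec_iff (hM : M.det ≠ 0) {G : (ι → ℝ) → E} :
    Integrable (fun z ↦ G (M *ᵥ z)) ↔ Integrable G := by
  rw [← Function.comp_def, ← (measurableEmbedding_mulVec hM).integrable_map_iff]
  erw [Real.map_matrix_volume_pi_eq_smul_volume_pi hM]
  exact integrable_smul_measure (by simpa using hM) ENNReal.ofReal_ne_top

end LinearChangeOfVariables

theorem integral_integral_eq_integral_last_init {n : ℕ} {E : Type*} [NormedAddCommGroup E]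
    [NormedSpace ℝ E] {F : ℝ → (Fin n → ℝ) → E}
    (hF : Integrable fun z : Fin (n + 1) → ℝ ↦ F (z (Fin.last n)) (Fin.init z)) :
    ∫ y, ∫ τ, F τ y = ∫ z : Fin (n + 1) → ℝ, F (z (Fin.last n)) (Fin.init z) := by
  have hmp := volume_preserving_piFinSuccAbove (fun _ : Fin (n + 1) ↦ ℝ) (Fin.last n)
  have hsplit : ∀ z : Fin (n + 1) → ℝ,
      MeasurableEquiv.piFinSuccAbove (fun _ ↦ ℝ) (Fin.last n) z = (z (Fin.last n), Fin.init z) :=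
    fun z ↦ by ext j <;> simp [Fin.init]
  have hF' : Integrable (Function.uncurry F) := by
    rw [← hmp.integrable_comp_emb (MeasurableEquiv.measurableEmbedding _)]
    simpa [Function.comp_def, hsplit] using hF
  rw [Measure.volume_eq_prod] at hF'
  calc ∫ y, ∫ τ, F τ y = ∫ τ, ∫ y, F τ y := (integral_integral_swap hF').symm
    _ = ∫ p : ℝ × (Fin n → ℝ), F p.1 p.2 := by
      rw [Measure.volume_eq_prod]; exact (integral_prod _ hF').symm
    _ = _ := by rw [← hmp.integral_comp']; simp only [hsplit]

section ChangeOfVariablesMatrix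

variable {n : ℕ}

noncomputable def changeOfVarsMatrix (ν : Fin (n + 1) → ℝ) :
    Matrix (Fin (n + 1)) (Fin (n + 1)) ℝ :=
  reindex finSumFinEquiv finSumFinEquiv <|
    fromBlocks (-diagonal (ν ∘ Fin.castSucc)) (replicateCol (Fin 1) 1)
      (replicateRow (Fin 1) fun _ ↦ ν (Fin.last n)) 1

theorem det_changeOfVarsMatrix {ν : Fin (n + 1) → ℝ} (hν : ∀ i, ν i ≠ 0) :
    (changeOfVarsMatrix ν).det = (-1) ^ n * (∏ i, ν i) * ∑ i, (ν i)⁻¹ := by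
  set d := ν ∘ Fin.castSucc
  set e : Fin n → ℝ := fun _ ↦ ν (Fin.last n)
  have hschur : -diagonal d - replicateCol (Fin 1) (1 : Fin n → ℝ) * replicateRow (Fin 1) e =
      -(diagonal d * (1 + replicateCol (Fin 1) d⁻¹ * replicateRow (Fin 1) e)) := by
    ext i j
    simp [Matrix.mul_apply, diagonal, d, hν, sub_eq_add_neg, mul_add, add_comm]
  rw [changeOfVarsMatrix, det_reindex_self, det_fromBlocks_one₂₂, hschur, det_neg, det_mul,
    det_diagonal]
  erw [det_one_add_replicateCol_mul_replicateRow]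
  rw [Fintype.card_fin, Fin.prod_univ_castSucc, Fin.sum_univ_castSucc]
  simp only [dotProduct, d, e, Function.comp_apply, Pi.inv_apply, ← Finset.mul_sum]
  field_simp [hν (Fin.last n)]
  ring

theorem abs_det_changeOfVarsMatrix {ν : Fin (n + 1) → ℝ} (hν : ∀ i, 0 < ν i) :
    |(changeOfVarsMatrix ν).det| = (∏ i, ν i) * ∑ i, (ν i)⁻¹ := by
  rw [det_changeOfVarsMatrix fun i ↦ (hν i).ne', abs_mul, abs_mul, abs_pow, abs_neg, abs_one,
    one_pow, one_mul, abs_of_pos (prod_pos fun i _ ↦ hν i),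
    abs_of_pos (sum_pos (fun i _ ↦ inv_pos.2 (hν i)) univ_nonempty)]

theorem changeOfVarsMatrix_mulVec_castSucc (ν : Fin (n + 1) → ℝ) (z : Fin (n + 1) → ℝ)
    (i : Fin n) :
    (changeOfVarsMatrix ν *ᵥ z) i.castSucc = z (Fin.last n) - ν i.castSucc * z i.castSucc := by
  -- `castSucc` and `last` unfold to the `castAdd 1` and `natAdd n 0` that `finSumFinEquiv` sees
  show (changeOfVarsMatrix ν *ᵥ z) (Fin.castAdd 1 i) =
    z (Fin.natAdd n 0) - ν i.castSucc * z (Fin.castAdd 1 i)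
  rw [changeOfVarsMatrix, reindex_apply, submatrix_mulVec_equiv, Function.comp_apply,
    finSumFinEquiv_symm_apply_castAdd, fromBlocks_mulVec]
  simp [mulVec, dotProduct, diagonal, sub_eq_neg_add]

theorem changeOfVarsMatrix_mulVec_last (ν : Fin (n + 1) → ℝ) (z : Fin (n + 1) → ℝ) :
    (changeOfVarsMatrix ν *ᵥ z) (Fin.last n) =
      z (Fin.last n) + ν (Fin.last n) * ∑ i : Fin n, z i.castSucc := by
  show (changeOfVarsMatrix ν *ᵥ z) (Fin.natAdd n 0) =
    z (Fin.natAdd n 0) + ν (Fin.last n) * ∑ i : Fin n, z (Fin.castAdd 1 i)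
  rw [changeOfVarsMatrix, reindex_apply, submatrix_mulVec_equiv, Function.comp_apply,
    finSumFinEquiv_symm_apply_natAdd, fromBlocks_mulVec]
  simp [mulVec, dotProduct, Finset.mul_sum, add_comm]

end ChangeOfVariablesMatrix

section ExpSum

variable {n : ℕ}

noncomputable def expSum (c ν : Fin (n + 1) → ℝ) (y : Fin n → ℝ) : ℝ :=
  ∑ i : Fin n, c i.castSucc * rexp (-ν i.castSucc * y i) +
    c (Fin.last n) * rexp (ν (Fin.last n) * ∑ i, y i)

theorem expSum_pos {c : Fin (n + 1) → ℝ} (hc : ∀ i, 0 < c i) (ν : Fin (n + 1) → ℝ)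
    (y : Fin n → ℝ) : 0 < expSum c ν y :=
  add_pos_of_nonneg_of_pos (sum_nonneg fun _ _ ↦ (mul_pos (hc _) (exp_pos _)).le)
    (mul_pos (hc _) (exp_pos _))

theorem sum_mul_exp_changeOfVarsMatrix_mulVec (c ν z : Fin (n + 1) → ℝ) :
    ∑ i, c i * rexp ((changeOfVarsMatrix ν *ᵥ z) i) =
      expSum c ν (Fin.init z) * rexp (z (Fin.last n)) := by
  simp only [Fin.sum_univ_castSucc, changeOfVarsMatrix_mulVec_castSucc,
    changeOfVarsMatrix_mulVec_last, expSum, add_mul, sum_mul, mul_assoc, ← Real.exp_add, Fin.init]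
  ring_nf

theorem sum_changeOfVarsMatrix_mulVec_div {ν : Fin (n + 1) → ℝ} (hν : ∀ i, ν i ≠ 0)
    (z : Fin (n + 1) → ℝ) :
    ∑ i, (changeOfVarsMatrix ν *ᵥ z) i / ν i = z (Fin.last n) * ∑ i, (ν i)⁻¹ := by
  have hinit (i : Fin n) : (z (Fin.last n) - ν i.castSucc * z i.castSucc) / ν i.castSucc =
      z (Fin.last n) * (ν i.castSucc)⁻¹ - z i.castSucc := by
    field_simp [hν i.castSucc]
  have hlast : (z (Fin.last n) + ν (Fin.last n) * ∑ i : Fin n, z i.castSucc) / ν (Fin.last n) =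
      z (Fin.last n) * (ν (Fin.last n))⁻¹ + ∑ i : Fin n, z i.castSucc := by
    field_simp [hν (Fin.last n)]
  simp only [Fin.sum_univ_castSucc, changeOfVarsMatrix_mulVec_castSucc,
    changeOfVarsMatrix_mulVec_last, hinit, hlast, sum_sub_distrib, ← mul_sum]
  ring

theorem prod_exp_changeOfVarsMatrix_mulVec (c : Fin (n + 1) → ℝ) {ν : Fin (n + 1) → ℝ}
    (hν : ∀ i, ν i ≠ 0) {q : ℝ} (hq : q * ∑ i, (ν i)⁻¹ = 1) (s : ℂ) (z : Fin (n + 1) → ℝ) :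
    ∏ i, cexp (((q / ν i : ℝ) : ℂ) * s * (changeOfVarsMatrix ν *ᵥ z) i -
        c i * rexp ((changeOfVarsMatrix ν *ᵥ z) i)) =
      cexp (s * z (Fin.last n) - expSum c ν (Fin.init z) * rexp (z (Fin.last n))) := by
  set w := changeOfVarsMatrix ν *ᵥ z
  have hlin : ∑ i, q / ν i * w i = z (Fin.last n) := by
    simp only [div_mul_eq_mul_div, mul_div_assoc, ← mul_sum]
    rw [sum_changeOfVarsMatrix_mulVec_div hν, mul_left_comm, hq, mul_one]
  rw [← Complex.exp_sum, sum_sub_distrib, ← ofReal_mul (expSum c ν (Fin.init z)),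
    ← sum_mul_exp_changeOfVarsMatrix_mulVec, ← hlin]
  push_cast
  rw [mul_sum]
  congr 2
  exact sum_congr rfl fun i _ ↦ by ring

end ExpSum

theorem integral_expSum_cpow_neg {n : ℕ} {c ν : Fin (n + 1) → ℝ} (hc : ∀ i, 0 < c i)
    (hν : ∀ i, 0 < ν i) {q : ℝ} (hq : q = (∑ i, (ν i)⁻¹)⁻¹) {s : ℂ} (hs : 0 < s.re) :
    ∫ y, (expSum c ν y : ℂ) ^ (-s) =
      q * (∏ i, (ν i : ℂ))⁻¹ * ((∏ i, c i ^ (q / ν i) : ℝ) : ℂ) ^ (-s) *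
        (Complex.Gamma s)⁻¹ * ∏ i, Complex.Gamma (q * s / ν i) := by
  have hsum : 0 < ∑ i, (ν i)⁻¹ := sum_pos (fun i _ ↦ inv_pos.2 (hν i)) univ_nonempty
  have hq0 : 0 < q := hq ▸ inv_pos.2 hsum
  have hGA := prod_exp_changeOfVarsMatrix_mulVec c (fun i ↦ (hν i).ne') (q := q)
    (by rw [hq, inv_mul_cancel₀ hsum.ne']) s
  set A := changeOfVarsMatrix ν
  set a : Fin (n + 1) → ℂ := fun i ↦ ((q / ν i : ℝ) : ℂ) * s
  have ha (i) : 0 < (a i).re := by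
    simpa only [a, re_ofReal_mul] using mul_pos (div_pos hq0 (hν i)) hs
  have hdet : |A.det| = (∏ i, ν i) * q⁻¹ := by rw [abs_det_changeOfVarsMatrix hν, hq, inv_inv]
  have hA : A.det ≠ 0 := abs_pos.1 (hdet ▸ mul_pos (prod_pos fun i _ ↦ hν i) (inv_pos.2 hq0))
  have hint := (integrable_comp_mulVec_iff hA).2 (integrable_prod_exp_mul_sub_mul_exp ha hc)
  simp only [a, hGA] at hint
  calc ∫ y, (expSum c ν y : ℂ) ^ (-s)
      = (Complex.Gamma s)⁻¹ * ∫ y, ∫ τ : ℝ, cexp (s * τ - expSum c ν y * rexp τ) := by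
        simp_rw [ofReal_cpow_neg_eq_integral (expSum_pos hc ν _) hs]
        exact integral_const_mul _ _
    _ = (Complex.Gamma s)⁻¹ * ∫ z, ∏ i, cexp (a i * (A *ᵥ z) i - c i * rexp ((A *ᵥ z) i)) := by
        rw [integral_integral_eq_integral_last_init hint]
        simp only [a, hGA]
    _ = (Complex.Gamma s)⁻¹ * (|A.det|⁻¹ • ∏ i, (c i : ℂ) ^ (-a i) * Complex.Gamma (a i)) := by
        rw [integral_comp_mulVec hA (fun w ↦ ∏ i, cexp (a i * w i - c i * rexp (w i))),
          integral_prod_exp_mul_sub_mul_exp ha hc]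
    _ = _ := by
        simp only [a, prod_mul_distrib, ← mul_neg,
          prod_ofReal_cpow_mul _ (fun i ↦ (hc i).le), hdet, real_smul]
        push_cast
        simp only [mul_inv, inv_inv, div_mul_eq_mul_div]
        ring

theorem integral_inv_cpow_sum_exp (N : ℕ) (hN : 2 ≤ N) (c : Fin N → ℝ)
    (hc : ∀ i, 0 < c i) (ν : Fin N → ℕ) (hν : ∀ i, 0 < ν i)
    (q : ℝ) (hq : q = (∑ i, ((ν i : ℝ))⁻¹)⁻¹)
    (s : ℂ) (hs : 0 < s.re) :
    (∫ y : Fin (N - 1) → ℝ,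
      ((((∑ i : Fin (N - 1), c (Fin.castLE (Nat.sub_le N 1) i) *
            Real.exp (-(ν (Fin.castLE (Nat.sub_le N 1) i) : ℝ) * y i)) +
          c ⟨N - 1, by omega⟩ *
            Real.exp ((ν (⟨N - 1, by omega⟩ : Fin N) : ℝ) * ∑ i, y i)) : ℝ) : ℂ) ^ (-s))
    = (q : ℂ) * ((∏ i, (ν i : ℂ)))⁻¹ *
        ((((∏ i, (c i) ^ (q / (ν i : ℝ))) : ℝ) : ℂ)) ^ (-s) *
        (Complex.Gamma s)⁻¹ * ∏ i, Complex.Gamma ((q : ℂ) * s / (ν i : ℂ)) := by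
  obtain ⟨n, rfl⟩ : ∃ n, N = n + 1 := ⟨N - 1, by omega⟩
  have := integral_expSum_cpow_neg hc (fun i ↦ Nat.cast_pos.2 (hν i)) hq hs
  simp only [ofReal_natCast] at this
  exact this
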